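/- arXiv:1403.4831 — 2 statements merged into one kernel-verified Lean document; each statement's English description precedes it below -/
import Mathlib

section
/- For every n ≥ 1, every 1 ≤ i ≤ n and every subset B ⊆ {1,…,n}, the inflated permutation D_i(σ_B) ∈ 𝔖_{n+1} is again a shuffle permutation; explicitly, D_i(σ_B) = σ_{B′_i(B)} where B′_i(B) = {b ∈ B : b < i} ∪ {b+1 : b ∈ B, b > i} ∪ ({i, i+1} if i ∈ B, and ∅ otherwise). -/
/-- The shuffle permutation `σ_A` associated to a subset `A ⊆ {1,…,n}`:
positions `1,…,|A|` are sent, in order, to the elements of `A` listed increasingly,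
and positions `|A|+1,…,n` are sent, in order, to the elements of the complement of `A`
listed increasingly.  (Here everything is 0-indexed, using `Fin n`.) -/
def shufflePerm {n : ℕ} (A : Finset (Fin n)) : Equiv.Perm (Fin n) :=
  (finCongr (show n = A.card + Aᶜ.card from by
      have h1 : A.card ≤ n := by simpa using Finset.card_le_univ A
      have h2 : Aᶜ.card = n - A.card := by simp [Finset.card_compl]
      omega)).trans <|
  finSumFinEquiv.symm.trans <|
  (Equiv.sumCongr (A.orderIsoOfFin rfl).toEquiv
      ((Aᶜ.orderIsoOfFin rfl).toEquiv.trans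
        (Equiv.subtypeEquivRight fun _ => Finset.mem_compl))).trans <|
  Equiv.sumCompl (· ∈ A)

/-- The inflation `D_i(σ) ∈ 𝔖_{n+1}` of a permutation `σ ∈ 𝔖_n`: in the one-line word of
`σ`, every letter `ℓ > i` is replaced by `ℓ+1` and the letter `i` is replaced by the two
consecutive letters `i, i+1`.  (0-indexed: `i : Fin n`, and the two consecutive letters are
`i.castSucc, i.succ` in `Fin (n+1)`.)  This is the operadic composition `σ ∘_i m_2` in the
associative operad. -/
def inflate {n : ℕ} (σ : Equiv.Perm (Fin n)) (i : Fin n) : Equiv.Perm (Fin (n + 1)) :=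
  (finSuccEquiv' ((σ⁻¹ i).succ)).trans ((Equiv.optionCongr σ).trans (finSuccEquiv' i.succ).symm)

/-- The subset `B′_i(B) ⊆ {1,…,n+1}`: elements of `B` below `i` are kept, elements of `B`
above `i` are shifted up by one, and if `i ∈ B` then both `i` and `i+1` are included.
(0-indexed via `Fin.castSucc` and `Fin.succ`.) -/
def inflateSet {n : ℕ} (B : Finset (Fin n)) (i : Fin n) : Finset (Fin (n + 1)) :=
  ((B.filter (· < i)).image Fin.castSucc) ∪ ((B.filter (i < ·)).image Fin.succ) ∪
    (if i ∈ B then {i.castSucc, i.succ} else ∅)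

/-- The shuffle element `sh_n = ∑_{A ⊆ {1,…,n}} σ_A` of the integral group algebra
`ℤ[𝔖_n]`. -/
noncomputable def sh (n : ℕ) : MonoidAlgebra ℤ (Equiv.Perm (Fin n)) :=
  ∑ A : Finset (Fin n), MonoidAlgebra.of ℤ (Equiv.Perm (Fin n)) (shufflePerm A)

/-!
Order `Fin n` lexicographically by the key `x ↦ (x ∉ A, x)`, so that the elements of `A` come
first and each block is increasing; `σ_A` is then the unique permutation along which the keys
increase strictly. The inflation `D_i(σ_B)` keeps the letters of `σ_B`, relabelled by the order
embedding `succAbove (i + 1)`, and inserts the new letter `i + 1` right after the letter `i`.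
Relabelling preserves both membership in `B′_i(B)` and the key order, and `i + 1` has the same
membership as `i`, so its key lies strictly between the key of `i` and the next larger key:
the keys still increase along `D_i(σ_B)`.
-/

open Finset

lemma Fin.strictMono_of_comp_succAbove {n : ℕ} {α : Type*} [Preorder α] {g : Fin (n + 1) → α}
    (p : Fin (n + 1)) (hg : StrictMono (g ∘ p.succAbove))
    (hbelow : ∀ j, p.succAbove j < p → g (p.succAbove j) < g p)
    (habove : ∀ j, p < p.succAbove j → g p < g (p.succAbove j)) :
    StrictMono g := by
  intro a b hab
  induction a using Fin.succAboveCases p with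
  | x =>
    induction b using Fin.succAboveCases p with
    | x => exact absurd hab (lt_irrefl _)
    | p j => exact habove j hab
  | p i =>
    induction b using Fin.succAboveCases p with
    | x => exact hbelow i hab
    | p j => exact hg (Fin.succAbove_lt_succAbove_iff.mp hab)

section ShuffleKey

variable {α : Type*} [LinearOrder α] (A : Finset α)

def shuffleKey (x : α) : Bool ×ₗ α := toLex (decide (x ∉ A), x)

lemma shuffleKey_injective : Function.Injective (shuffleKey A) :=
  fun _ _ h => congrArg (·.2) (congrArg ofLex h)

lemma shuffleKey_lt_shuffleKey_iff {x y : α} :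
    shuffleKey A x < shuffleKey A y ↔ x ∈ A ∧ y ∉ A ∨ (x ∈ A ↔ y ∈ A) ∧ x < y := by
  by_cases hx : x ∈ A <;> by_cases hy : y ∈ A <;>
    simp [shuffleKey, Prod.Lex.toLex_lt_toLex, hx, hy]

lemma shuffleKey_le_shuffleKey_iff {x y : α} :
    shuffleKey A x ≤ shuffleKey A y ↔ x ∈ A ∧ y ∉ A ∨ (x ∈ A ↔ y ∈ A) ∧ x ≤ y := by
  by_cases hx : x ∈ A <;> by_cases hy : y ∈ A <;>
    simp [shuffleKey, Prod.Lex.toLex_le_toLex, hx, hy]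

end ShuffleKey

section ShufflePerm

variable {n : ℕ} (A : Finset (Fin n))

lemma card_add_card_compl_fin : #A + #Aᶜ = n :=
  A.card_add_card_compl.trans (Fintype.card_fin n)

lemma shufflePerm_cast_castAdd (j : Fin #A) :
    shufflePerm A (Fin.cast (card_add_card_compl_fin A) (Fin.castAdd _ j)) =
      A.orderEmbOfFin rfl j := by
  simp [shufflePerm]

lemma shufflePerm_cast_natAdd (j : Fin #Aᶜ) :
    shufflePerm A (Fin.cast (card_add_card_compl_fin A) (Fin.natAdd _ j)) =
      Aᶜ.orderEmbOfFin rfl j := by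
  simp [shufflePerm]

lemma strictMono_shuffleKey_comp_shufflePerm : StrictMono (shuffleKey A ∘ shufflePerm A) := by
  have hcast := (Fin.castOrderIso (card_add_card_compl_fin A)).surjective
  intro k l hkl
  obtain ⟨k, rfl⟩ := hcast k
  obtain ⟨l, rfl⟩ := hcast l
  rw [OrderIso.lt_iff_lt] at hkl
  have hcompl (j : Fin #Aᶜ) : Aᶜ.orderEmbOfFin rfl j ∉ A := mem_compl.mp (orderEmbOfFin_mem _ _ _)
  induction k using Fin.addCases <;> induction l using Fin.addCases <;>
    simp_all [shufflePerm_cast_castAdd, shufflePerm_cast_natAdd, shuffleKey,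
      Prod.Lex.toLex_lt_toLex, (Fin.strictMono_castAdd _).lt_iff_lt]
  rw [Fin.lt_def, Fin.val_natAdd, Fin.val_castAdd] at hkl
  omega

lemma strictMono_shuffleKey_comp_iff (τ : Equiv.Perm (Fin n)) :
    StrictMono (shuffleKey A ∘ τ) ↔ τ = shufflePerm A := by
  refine ⟨fun hτ => ?_, fun h => h ▸ strictMono_shuffleKey_comp_shufflePerm A⟩
  have hrange : Set.range (shuffleKey A ∘ τ) = Set.range (shuffleKey A ∘ shufflePerm A) := by
    simp only [Set.range_comp, Equiv.range_eq_univ]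
  exact Equiv.ext <| congrFun <| (shuffleKey_injective A).comp_left <|
    (hτ.range_inj (strictMono_shuffleKey_comp_shufflePerm A)).mp hrange

end ShufflePerm

section Inflate

variable {n : ℕ}

lemma inflate_apply_succAbove (σ : Equiv.Perm (Fin n)) (i j : Fin n) :
    inflate σ i ((σ⁻¹ i).succ.succAbove j) = i.succ.succAbove (σ j) := by
  simp [inflate]

lemma inflate_apply_succ_inv_apply (σ : Equiv.Perm (Fin n)) (i : Fin n) :
    inflate σ i (σ⁻¹ i).succ = i.succ := by
  simp [inflate]

variable (B : Finset (Fin n)) (i : Fin n)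

lemma succ_succAbove_mem_inflateSet (x : Fin n) :
    i.succ.succAbove x ∈ inflateSet B i ↔ x ∈ B := by
  simp only [inflateSet, mem_union, mem_image, mem_filter, Fin.succAbove]
  split_ifs <;> grind [Fin.ext_iff, Fin.lt_def, Fin.val_castSucc]

lemma succ_mem_inflateSet : i.succ ∈ inflateSet B i ↔ i ∈ B := by
  simp only [inflateSet, mem_union, mem_image, mem_filter]
  split_ifs <;> grind [Fin.ext_iff, Fin.lt_def, Fin.val_castSucc]

lemma shuffleKey_inflateSet_succAbove_lt_succAbove_iff {x y : Fin n} :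
    shuffleKey (inflateSet B i) (i.succ.succAbove x) <
      shuffleKey (inflateSet B i) (i.succ.succAbove y) ↔ shuffleKey B x < shuffleKey B y := by
  simp [shuffleKey_lt_shuffleKey_iff, succ_succAbove_mem_inflateSet,
    Fin.succAbove_lt_succAbove_iff]

lemma shuffleKey_inflateSet_succAbove_lt_succ_iff (x : Fin n) :
    shuffleKey (inflateSet B i) (i.succ.succAbove x) < shuffleKey (inflateSet B i) i.succ ↔
      shuffleKey B x ≤ shuffleKey B i := by
  simp [shuffleKey_lt_shuffleKey_iff, shuffleKey_le_shuffleKey_iff, succ_succAbove_mem_inflateSet,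
    succ_mem_inflateSet, Fin.succAbove_lt_iff_castSucc_lt]

lemma shuffleKey_inflateSet_succ_lt_succAbove_iff (x : Fin n) :
    shuffleKey (inflateSet B i) i.succ < shuffleKey (inflateSet B i) (i.succ.succAbove x) ↔
      shuffleKey B i < shuffleKey B x := by
  simp [shuffleKey_lt_shuffleKey_iff, succ_succAbove_mem_inflateSet, succ_mem_inflateSet,
    Fin.lt_succAbove_iff_le_castSucc]

end Inflate

/-- The inflation `D_i(σ_B)` of a shuffle permutation is again a shuffle
permutation, namely the one associated to the subset `B′_i(B)`. -/
theorem inflate_shufflePerm {n : ℕ} (i : Fin n) (B : Finset (Fin n)) :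
    inflate (shufflePerm B) i = shufflePerm (inflateSet B i) := by
  set σ := shufflePerm B
  have hkey : StrictMono (shuffleKey B ∘ σ) := strictMono_shuffleKey_comp_shufflePerm B
  have hσ : σ (σ⁻¹ i) = i := σ.apply_symm_apply i
  rw [← strictMono_shuffleKey_comp_iff]
  refine Fin.strictMono_of_comp_succAbove (σ⁻¹ i).succ (fun a b hab => ?_)
    (fun j hj => ?_) (fun j hj => ?_)
  · simp only [Function.comp_apply, inflate_apply_succAbove,
      shuffleKey_inflateSet_succAbove_lt_succAbove_iff]
    exact hkey hab
  · rw [Fin.succAbove_lt_iff_castSucc_lt, Fin.castSucc_lt_succ_iff] at hj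
    simp only [Function.comp_apply, inflate_apply_succAbove, inflate_apply_succ_inv_apply,
      shuffleKey_inflateSet_succAbove_lt_succ_iff]
    exact hσ ▸ hkey.monotone hj
  · rw [Fin.lt_succAbove_iff_le_castSucc, Fin.succ_le_castSucc_iff] at hj
    simp only [Function.comp_apply, inflate_apply_succAbove, inflate_apply_succ_inv_apply,
      shuffleKey_inflateSet_succ_lt_succAbove_iff]
    exact hσ ▸ hkey hj
end

section
/- Let n ≥ 1 and 1 ≤ i ≤ n, and let A ⊆ {1,…,n+1} be a subset containing exactly one of the two elements i and i+1. Then t_i ∘ σ_A = σ_{A Δ {i,i+1}}, where t_i = (i, i+1) is the adjacent transposition, ∘ denotes composition of permutations (apply σ_A first, then t_i), and A Δ {i,i+1} denotes the symmetric difference of A with {i, i+1}. -/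
lemma shufflePerm_apply_lt {n : ℕ} (A : Finset (Fin n)) (k : Fin n) (h : (k : ℕ) < A.card) :
    shufflePerm A k = A.orderEmbOfFin rfl ⟨k, h⟩ := by
  have hc : n = A.card + Aᶜ.card := by
    have h1 : A.card ≤ n := by simpa using Finset.card_le_univ A
    have h2 : Aᶜ.card = n - A.card := by simp [Finset.card_compl]
    omega
  have h1 : finCongr hc k = Fin.castAdd Aᶜ.card ⟨k, h⟩ := by ext; simp
  rw [shufflePerm]
  simp only [Equiv.trans_apply]
  rw [h1, finSumFinEquiv_symm_apply_castAdd]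
  simp

lemma shufflePerm_apply_ge {n : ℕ} (A : Finset (Fin n)) (k : Fin n) (h : A.card ≤ (k : ℕ))
    (h2 : (k : ℕ) - A.card < Aᶜ.card) :
    shufflePerm A k = Aᶜ.orderEmbOfFin rfl ⟨(k : ℕ) - A.card, h2⟩ := by
  have hc : n = A.card + Aᶜ.card := by
    have h1 : A.card ≤ n := by simpa using Finset.card_le_univ A
    have h2 : Aᶜ.card = n - A.card := by simp [Finset.card_compl]
    omega
  have h1 : finCongr hc k = Fin.natAdd A.card ⟨(k : ℕ) - A.card, h2⟩ := by ext; simp; omega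
  rw [shufflePerm]
  simp only [Equiv.trans_apply]
  rw [h1, finSumFinEquiv_symm_apply_natAdd]
  simp

lemma mul_shufflePerm_image {n : ℕ} (e : Equiv.Perm (Fin n)) (A : Finset (Fin n))
    (hA : ∀ x ∈ A, ∀ y ∈ A, x < y → e x < e y)
    (hAc : ∀ x ∈ Aᶜ, ∀ y ∈ Aᶜ, x < y → e x < e y) :
    e * shufflePerm A = shufflePerm (A.image ⇑e) := by
  have hcard : (A.image ⇑e).card = A.card := Finset.card_image_of_injective _ e.injective
  have hcompl : (A.image ⇑e)ᶜ = Aᶜ.image ⇑e := by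
    ext x
    simp only [Finset.mem_compl, Finset.mem_image]
    constructor
    · intro hx
      exact ⟨e.symm x, fun h => hx ⟨e.symm x, h, by simp⟩, by simp⟩
    · rintro ⟨y, hy, rfl⟩ ⟨z, hz, hez⟩
      exact hy (e.injective hez ▸ hz)
  have hccard : (A.image ⇑e)ᶜ.card = Aᶜ.card := by
    rw [hcompl]; exact Finset.card_image_of_injective _ e.injective
  ext k
  rcases lt_or_ge (k : ℕ) A.card with h | h
  · rw [Equiv.Perm.mul_apply, shufflePerm_apply_lt A k h,
      shufflePerm_apply_lt (A.image ⇑e) k (hcard ▸ h)]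
    have key : (fun j : Fin (A.image ⇑e).card => e (A.orderEmbOfFin rfl (Fin.cast hcard j)))
        = (A.image ⇑e).orderEmbOfFin rfl := by
      apply Finset.orderEmbOfFin_unique
      · intro x; exact Finset.mem_image_of_mem _ (Finset.orderEmbOfFin_mem _ _ _)
      · intro x y hxy
        exact hA _ (Finset.orderEmbOfFin_mem _ _ _) _ (Finset.orderEmbOfFin_mem _ _ _)
          ((A.orderEmbOfFin rfl).strictMono (by simpa using hxy))
    have := congrFun key ⟨(k : ℕ), hcard ▸ h⟩
    rw [← this]
    congr 1
  · have h2 : (k : ℕ) - A.card < Aᶜ.card := by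
      have h1 : A.card ≤ n := by simpa using Finset.card_le_univ A
      have h2 : Aᶜ.card = n - A.card := by simp [Finset.card_compl]
      omega
    have h2' : (k : ℕ) - (A.image ⇑e).card < (A.image ⇑e)ᶜ.card := by rw [hcard, hccard]; exact h2
    rw [Equiv.Perm.mul_apply, shufflePerm_apply_ge A k h h2,
      shufflePerm_apply_ge (A.image ⇑e) k (hcard ▸ h) h2']
    have key : (fun j : Fin (A.image ⇑e)ᶜ.card => e (Aᶜ.orderEmbOfFin rfl (Fin.cast hccard j)))
        = (A.image ⇑e)ᶜ.orderEmbOfFin rfl := by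
      apply Finset.orderEmbOfFin_unique
      · intro x
        have : e ((Aᶜ.orderEmbOfFin rfl) (Fin.cast hccard x)) ∈ Finset.image (⇑e) Aᶜ :=
          Finset.mem_image_of_mem _ (Finset.orderEmbOfFin_mem _ _ _)
        rwa [← hcompl] at this
      · intro x y hxy
        exact hAc _ (Finset.orderEmbOfFin_mem _ _ _) _ (Finset.orderEmbOfFin_mem _ _ _)
          ((Aᶜ.orderEmbOfFin rfl).strictMono (by simpa using hxy))
    have := congrFun key ⟨(k : ℕ) - (A.image ⇑e).card, h2'⟩
    rw [← this]
    congr 1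
    · ext; simp [hcard]

lemma swap_mono_aux₁ {n : ℕ} (i : Fin n) {x y : Fin (n + 1)} (hx : x ≠ i.succ)
    (hy : y ≠ i.succ) (hxy : x < y) :
    Equiv.swap i.castSucc i.succ x < Equiv.swap i.castSucc i.succ y := by
  simp only [Equiv.swap_apply_def]
  split_ifs <;>
    simp only [Fin.ext_iff, Fin.lt_def, Fin.val_succ, Fin.coe_castSucc, ne_eq] at * <;> omega

lemma swap_mono_aux₂ {n : ℕ} (i : Fin n) {x y : Fin (n + 1)} (hx : x ≠ i.castSucc)
    (hy : y ≠ i.castSucc) (hxy : x < y) :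
    Equiv.swap i.castSucc i.succ x < Equiv.swap i.castSucc i.succ y := by
  simp only [Equiv.swap_apply_def]
  split_ifs <;>
    simp only [Fin.ext_iff, Fin.lt_def, Fin.val_succ, Fin.coe_castSucc, ne_eq] at * <;> omega

lemma symmDiff_eq_image_swap {n : ℕ} (i : Fin n) (A : Finset (Fin (n + 1)))
    (hA : (i.castSucc ∈ A ∧ i.succ ∉ A) ∨ (i.succ ∈ A ∧ i.castSucc ∉ A)) :
    symmDiff A {i.castSucc, i.succ} = A.image ⇑(Equiv.swap i.castSucc i.succ) := by
  have himg : ∀ x : Fin (n + 1),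
      x ∈ A.image ⇑(Equiv.swap i.castSucc i.succ) ↔ Equiv.swap i.castSucc i.succ x ∈ A := by
    intro x
    rw [Finset.mem_image]
    constructor
    · rintro ⟨y, hy, rfl⟩
      rwa [Equiv.swap_apply_self]
    · intro h
      exact ⟨_, h, Equiv.swap_apply_self _ _ _⟩
  ext x
  rw [himg, Finset.mem_symmDiff]
  by_cases hxa : x = i.castSucc
  · subst hxa
    simp only [Equiv.swap_apply_left, Finset.mem_insert, Finset.mem_singleton]
    tauto
  by_cases hxb : x = i.succ
  · subst hxb
    simp only [Equiv.swap_apply_right, Finset.mem_insert, Finset.mem_singleton]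
    tauto
  · rw [Equiv.swap_apply_of_ne_of_ne hxa hxb]
    simp only [Finset.mem_insert, Finset.mem_singleton]
    tauto

/-- If `A ⊆ {1,…,n+1}` contains exactly one of `i` and `i+1`, then
`t_i ∘ σ_A = σ_{A Δ {i,i+1}}`, where `t_i = (i, i+1)` and `Δ` is the symmetric
difference. -/
theorem swap_mul_shufflePerm {n : ℕ} (i : Fin n) (A : Finset (Fin (n + 1)))
    (hA : (i.castSucc ∈ A ∧ i.succ ∉ A) ∨ (i.succ ∈ A ∧ i.castSucc ∉ A)) :
    Equiv.swap i.castSucc i.succ * shufflePerm A =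
      shufflePerm (symmDiff A {i.castSucc, i.succ}) := by
  rw [symmDiff_eq_image_swap i A hA]
  apply mul_shufflePerm_image
  · intro x hx y hy hxy
    rcases hA with ⟨_, hb⟩ | ⟨_, ha⟩
    · exact swap_mono_aux₁ i (fun h => hb (h ▸ hx)) (fun h => hb (h ▸ hy)) hxy
    · exact swap_mono_aux₂ i (fun h => ha (h ▸ hx)) (fun h => ha (h ▸ hy)) hxy
  · intro x hx y hy hxy
    rw [Finset.mem_compl] at hx hy
    rcases hA with ⟨ha, _⟩ | ⟨hb, _⟩
    · exact swap_mono_aux₂ i (fun h => hx (h ▸ ha)) (fun h => hy (h ▸ ha)) hxy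
    · exact swap_mono_aux₁ i (fun h => hx (h ▸ hb)) (fun h => hy (h ▸ hb)) hxy
end
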